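/- For every nonnegative integer r, every n ∈ {2, …, N} and every f ∈ ℂ^N, λ_n^{−r/2} ‖L^{r/2} P_n f‖₂ ≤ (π/2)^r · ω_r(f, λ_n^{−1/2}). -/

import Mathlib

open Matrix

noncomputable section

/-- Euclidean (2-)norm on `ℂ^N`. -/
def cnorm2 {N : ℕ} (f : Fin N → ℂ) : ℝ := Real.sqrt (∑ i, ‖f i‖ ^ 2)

/-- The spectral operator `Σ_j c_j u_j u_j^*`. -/
def specOp {N : ℕ} (u : Fin N → Fin N → ℂ) (c : Fin N → ℂ) : Matrix (Fin N) (Fin N) ℂ :=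
  ∑ j, c j • Matrix.vecMulVec (u j) (star (u j))

/-- The graph translation operator `T_s = Σ_j e^{i s √λ_j} u_j u_j^*`. -/
def Tmat {N : ℕ} (u : Fin N → Fin N → ℂ) (lam : Fin N → ℝ) (s : ℝ) :
    Matrix (Fin N) (Fin N) ℂ :=
  specOp u (fun j => Complex.exp (Complex.I * (s : ℂ) * (Real.sqrt (lam j) : ℂ)))

/-- The `r`-th modulus of smoothness `ω_r(f,t) = sup_{|s| ≤ t} ‖(T_s - I)^r f‖₂`. -/
def omegaMod {N : ℕ} (u : Fin N → Fin N → ℂ) (lam : Fin N → ℝ) (r : ℕ) (f : Fin N → ℂ)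
    (t : ℝ) : ℝ :=
  ⨆ s : {s : ℝ // |s| ≤ t}, cnorm2 (((Tmat u lam s.1 - 1) ^ r).mulVec f)

/-- Functional calculus power `L^x = Σ_j λ_j^x u_j u_j^*` (with `0^0 = 1`). -/
def Lpow {N : ℕ} (u : Fin N → Fin N → ℂ) (lam : Fin N → ℝ) (x : ℝ) :
    Matrix (Fin N) (Fin N) ℂ :=
  specOp u (fun j => ((lam j ^ x : ℝ) : ℂ))

/-- Orthogonal projection `P_n = Σ_{j=1}^n u_j u_j^*` onto `span(u_1, …, u_n)`
(`u_k` corresponds to the index `k-1 : Fin N`). -/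
def Pproj {N : ℕ} (u : Fin N → Fin N → ℂ) (n : ℕ) : Matrix (Fin N) (Fin N) ℂ :=
  specOp u (fun j => if (j : ℕ) < n then 1 else 0)

/-! All operators involved are functions of `L`, diagonal in the orthonormal eigenbasis `u`, so by
Parseval both sides are weighted `ℓ²`-norms of the coefficients `⟨u_j, f⟩` and it suffices to
compare the weights. Take `s = t = λ_n^{-1/2}` in the modulus of smoothness. For `j < n` put
`θ = t √λ_j ∈ [0, 1]`: the weight on the left is `θ^r`, the one on the right is
`(π/2)^r |e^{iθ} - 1|^r = (π/2)^r (2 sin (θ/2))^r`, and Jordan's inequality `sin x ≥ 2x/π` on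
`[0, π/2]` gives `θ ≤ (π/2) · 2 sin (θ/2)`. -/

section Spectral

variable {N : ℕ} {u : Fin N → Fin N → ℂ}

lemma specOp_mulVec (u : Fin N → Fin N → ℂ) (c f : Fin N → ℂ) :
    specOp u c *ᵥ f = ∑ j, (c j * (star (u j) ⬝ᵥ f)) • u j := by
  simp only [specOp, sum_mulVec, smul_mulVec, vecMulVec_mulVec, op_smul_eq_smul, smul_smul]

lemma specOp_sub (u : Fin N → Fin N → ℂ) (a b : Fin N → ℂ) :
    specOp u a - specOp u b = specOp u (a - b) := by
  simp only [specOp, ← Finset.sum_sub_distrib, ← sub_smul, Pi.sub_apply]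

variable (hu : ∀ i j, star (u i) ⬝ᵥ u j = if i = j then 1 else 0)
include hu

lemma star_dotProduct_sum_smul (x : Fin N → ℂ) (i : Fin N) :
    star (u i) ⬝ᵥ ∑ j, x j • u j = x i := by
  simp [dotProduct_sum, dotProduct_smul, hu]

lemma specOp_one : specOp u 1 = 1 := by
  have h : (of u).map star * (of u)ᵀ = 1 := by
    ext i k
    simpa [mul_apply, dotProduct, one_apply] using hu i k
  ext i k
  simpa [specOp, mul_apply, one_apply, Matrix.sum_apply, vecMulVec_apply] using
    congr($(mul_eq_one_comm.mp h) i k)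

lemma specOp_mul (a b : Fin N → ℂ) : specOp u a * specOp u b = specOp u (a * b) := by
  simp only [specOp, Finset.sum_mul_sum, smul_mul_smul, vecMulVec_mul_vecMulVec, hu]
  refine Finset.sum_congr rfl fun i _ => ?_
  rw [Finset.sum_eq_single i (fun j _ hji => by simp [Ne.symm hji]) (by simp)]
  simp

lemma specOp_pow (c : Fin N → ℂ) (r : ℕ) : specOp u c ^ r = specOp u (c ^ r) := by
  induction r with
  | zero => simp [specOp_one hu]
  | succ r ih => rw [pow_succ, ih, specOp_mul hu, pow_succ]

lemma cnorm2_sum_smul (x : Fin N → ℂ) : cnorm2 (∑ j, x j • u j) = √(∑ j, ‖x j‖ ^ 2) := by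
  have sum_sq_norm : ∀ v : Fin N → ℂ, ((∑ i, ‖v i‖ ^ 2 : ℝ) : ℂ) = star v ⬝ᵥ v := fun v => by
    push_cast
    simp [dotProduct, Complex.conj_mul']
  have h : star (∑ j, x j • u j) ⬝ᵥ ∑ j, x j • u j = star x ⬝ᵥ x := by
    simp only [star_sum, star_smul, sum_dotProduct, smul_dotProduct, star_dotProduct_sum_smul hu]
    rfl
  rw [cnorm2]
  congr 1
  exact_mod_cast (sum_sq_norm _).trans (h.trans (sum_sq_norm x).symm)

lemma cnorm2_specOp_mulVec (c f : Fin N → ℂ) :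
    cnorm2 (specOp u c *ᵥ f) = √(∑ j, ‖c j * (star (u j) ⬝ᵥ f)‖ ^ 2) := by
  rw [specOp_mulVec, cnorm2_sum_smul hu]

lemma mul_cnorm2_specOp_mulVec_le {a b : Fin N → ℂ} {c C : ℝ} (hc : 0 ≤ c) (hC : 0 ≤ C)
    (h : ∀ j, c * ‖a j‖ ≤ C * ‖b j‖) (f : Fin N → ℂ) :
    c * cnorm2 (specOp u a *ᵥ f) ≤ C * cnorm2 (specOp u b *ᵥ f) := by
  rw [cnorm2_specOp_mulVec hu, cnorm2_specOp_mulVec hu, ← Real.sqrt_sq hc, ← Real.sqrt_sq hC,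
    ← Real.sqrt_mul (sq_nonneg _), ← Real.sqrt_mul (sq_nonneg _), Finset.mul_sum, Finset.mul_sum]
  refine Real.sqrt_le_sqrt (Finset.sum_le_sum fun j _ => ?_)
  simp only [norm_mul, ← mul_pow, ← mul_assoc]
  gcongr (?_ * _) ^ 2
  exact h j

end Spectral

open Complex in
lemma norm_exp_I_mul_sub_one_le_two (x : ℝ) : ‖exp (I * x) - 1‖ ≤ 2 := by
  rw [norm_exp_I_mul_ofReal_sub_one, Real.norm_eq_abs, abs_mul, abs_two]
  linarith [Real.abs_sin_le_one (x / 2)]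

open Complex Real in
lemma le_pi_div_two_mul_norm_exp_I_mul_sub_one {θ : ℝ} (h0 : 0 ≤ θ) (hθ : θ ≤ π) :
    θ ≤ π / 2 * ‖exp (I * θ) - 1‖ := by
  have hsin := mul_le_sin (by linarith : 0 ≤ θ / 2) (by linarith : θ / 2 ≤ π / 2)
  rw [norm_exp_I_mul_ofReal_sub_one,
    Real.norm_of_nonneg (by linarith [hsin, show 0 ≤ 2 / π * (θ / 2) by positivity])]
  calc θ = π / 2 * (2 * (2 / π * (θ / 2))) := by field_simp
    _ ≤ π / 2 * (2 * Real.sin (θ / 2)) := by gcongr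

open Complex Real in
lemma rpow_neg_div_two_mul_rpow_div_two_le {l Λ : ℝ} (hl : 0 ≤ l) (hΛ : 0 < Λ) (hlΛ : l ≤ Λ)
    (r : ℕ) :
    Λ ^ (-(r : ℝ) / 2) * l ^ ((r : ℝ) / 2) ≤
      (π / 2) ^ r * ‖exp (I * (Λ ^ (-(1 : ℝ) / 2) : ℝ) * (√l : ℝ)) - 1‖ ^ r := by
  have hlhs : Λ ^ (-(r : ℝ) / 2) * l ^ ((r : ℝ) / 2) = (Λ ^ (-(1 : ℝ) / 2) * √l) ^ r := by
    rw [mul_pow, ← Real.rpow_natCast, ← Real.rpow_natCast, Real.sqrt_eq_rpow,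
      ← Real.rpow_mul hΛ.le, ← Real.rpow_mul hl]
    ring_nf
  have hθ0 : 0 ≤ Λ ^ (-(1 : ℝ) / 2) * √l := by positivity
  have hθ1 : Λ ^ (-(1 : ℝ) / 2) * √l ≤ 1 := by
    rw [show -(1 : ℝ) / 2 = -(1 / 2) by ring, Real.rpow_neg hΛ.le, ← Real.sqrt_eq_rpow,
      inv_mul_eq_div]
    exact div_le_one_of_le₀ (Real.sqrt_le_sqrt hlΛ) (Real.sqrt_nonneg _)
  rw [hlhs, ← mul_pow, mul_assoc, ← ofReal_mul]
  exact pow_le_pow_left₀ hθ0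
    (le_pi_div_two_mul_norm_exp_I_mul_sub_one hθ0 (hθ1.trans (by linarith [pi_gt_three]))) r

section Translation

variable {N : ℕ} {u : Fin N → Fin N → ℂ}
  (hu : ∀ i j, star (u i) ⬝ᵥ u j = if i = j then 1 else 0)
include hu

lemma Tmat_sub_one_pow (lam : Fin N → ℝ) (s : ℝ) (r : ℕ) :
    (Tmat u lam s - 1) ^ r =
      specOp u (fun j => (Complex.exp (Complex.I * s * (√(lam j) : ℝ)) - 1) ^ r) := by
  rw [Tmat, ← specOp_one hu, specOp_sub, specOp_pow hu]
  rfl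

lemma cnorm2_le_omegaMod (lam : Fin N → ℝ) (r : ℕ) (f : Fin N → ℂ) {s t : ℝ} (hs : |s| ≤ t) :
    cnorm2 ((Tmat u lam s - 1) ^ r *ᵥ f) ≤ omegaMod u lam r f t := by
  have hbound : ∀ s, cnorm2 ((Tmat u lam s - 1) ^ r *ᵥ f) ≤ 2 ^ r * cnorm2 f := fun s => by
    simpa [Tmat_sub_one_pow hu, specOp_one hu] using
      mul_cnorm2_specOp_mulVec_le hu (b := 1) zero_le_one (by positivity) (fun j => by
        rw [one_mul, norm_pow, Pi.one_apply, norm_one, mul_one, mul_assoc, ← Complex.ofReal_mul]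
        exact pow_le_pow_left₀ (norm_nonneg _) (norm_exp_I_mul_sub_one_le_two _) r) f
  exact le_ciSup (f := fun s : {s : ℝ // |s| ≤ t} => cnorm2 ((Tmat u lam s - 1) ^ r *ᵥ f))
    ⟨2 ^ r * cnorm2 f, by rintro _ ⟨s, rfl⟩; exact hbound s⟩ ⟨s, hs⟩

end Translation

/-- For every nonnegative integer `r`, every `n ∈ {2, …, N}` and every
`f ∈ ℂ^N`, `λ_n^{-r/2} ‖L^{r/2} P_n f‖₂ ≤ (π/2)^r · ω_r(f, λ_n^{-1/2})`. -/
theorem stmt2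
    (N : ℕ) (hN : 2 ≤ N)
    (u : Fin N → Fin N → ℂ)
    (hu : ∀ i j, star (u i) ⬝ᵥ u j = if i = j then 1 else 0)
    (lam : Fin N → ℝ) (hmono : Monotone lam)
    (hlam0 : lam ⟨0, by omega⟩ = 0) (hlam1 : 0 < lam ⟨1, by omega⟩)
    (r : ℕ) (n : ℕ) (hn2 : 2 ≤ n) (hnN : n ≤ N) (f : Fin N → ℂ) :
    lam ⟨n - 1, by omega⟩ ^ (-(r : ℝ) / 2) *
        cnorm2 ((Lpow u lam ((r : ℝ) / 2)).mulVec ((Pproj u n).mulVec f)) ≤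
      (Real.pi / 2) ^ r * omegaMod u lam r f (lam ⟨n - 1, by omega⟩ ^ (-(1 : ℝ) / 2)) := by
  have hlam_nonneg : ∀ j, 0 ≤ lam j := fun j => hlam0 ▸ hmono (Nat.zero_le j.val)
  have hΛ : 0 < lam ⟨n - 1, by omega⟩ := hlam1.trans_le (hmono (show 1 ≤ n - 1 by omega))
  rw [Lpow, Pproj, mulVec_mulVec, specOp_mul hu]
  calc _ ≤ (Real.pi / 2) ^ r *
        cnorm2 ((Tmat u lam (lam ⟨n - 1, by omega⟩ ^ (-(1 : ℝ) / 2)) - 1) ^ r *ᵥ f) := by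
        rw [Tmat_sub_one_pow hu]
        refine mul_cnorm2_specOp_mulVec_le hu (by positivity) (by positivity) (fun j => ?_) f
        rw [Pi.mul_apply, norm_pow]
        split_ifs with hj
        · rw [mul_one, Complex.norm_real, Real.norm_of_nonneg (Real.rpow_nonneg (hlam_nonneg j) _)]
          exact rpow_neg_div_two_mul_rpow_div_two_le (hlam_nonneg j) hΛ
            (hmono (show j.val ≤ n - 1 by omega)) r
        · simp only [mul_zero, norm_zero]
          positivity
    _ ≤ _ := by
        gcongr
        exact cnorm2_le_omegaMod hu lam r f (abs_of_pos (by positivity)).le
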